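/- arXiv:2010.07084 — 7 statements merged into one kernel-verified Lean document; each statement's English description precedes it below -/
import Mathlib

section
/- For every natural number k ≥ 1 and every odd natural number q, the graph G_{q,2^{k-1}} is not (ℤ₂)^k-connected, where (ℤ₂)^k denotes the direct product of k copies of the cyclic group of order 2. -/
/-- A finite multigraph (no loops) given with a reference orientation:
each edge `e` is directed from `src e` to `tgt e`. -/
structure Multigraph where
  V : Type
  E : Type
  vFintype : Fintype V
  eFintype : Fintype E
  vDecEq : DecidableEq V
  eDecEq : DecidableEq E
  src : E → V
  tgt : E → V
  no_loop : ∀ e, src e ≠ tgt e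

attribute [instance] Multigraph.vFintype Multigraph.eFintype Multigraph.vDecEq Multigraph.eDecEq

namespace Multigraph

/-- The net out-flow of `f` at a vertex `v` :
the sum of `f` over edges leaving `v` minus the sum of `f` over edges entering `v`. -/
def netFlow (G : Multigraph) {Γ : Type} [AddCommGroup Γ] (f : G.E → Γ) (v : G.V) : Γ :=
  (∑ e : G.E, if G.src e = v then f e else 0) - (∑ e : G.E, if G.tgt e = v then f e else 0)

/-- `f` is a `Γ`-flow: net flow zero at every vertex. -/
def IsFlow (G : Multigraph) {Γ : Type} [AddCommGroup Γ] (f : G.E → Γ) : Prop :=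
  ∀ v : G.V, G.netFlow f v = 0

/-- `G` is `Γ`-connected: for every `β : V → Γ` summing to zero there is a
nowhere-zero `f : E → Γ` whose net flow at each vertex `v` is `β v`. -/
def GroupConnected (G : Multigraph) (Γ : Type) [AddCommGroup Γ] : Prop :=
  ∀ β : G.V → Γ, (∑ v : G.V, β v) = 0 →
    ∃ f : G.E → Γ, (∀ e, f e ≠ 0) ∧ ∀ v : G.V, G.netFlow f v = β v

/-- `G` is `Γ`-colorable: for every forbidding function `φ` on the edges there is a
coloring `c` of the vertices with `c(tgt e) - c(src e) ≠ φ e` for every edge `e`. -/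
def GroupColorable (G : Multigraph) (Γ : Type) [AddCommGroup Γ] : Prop :=
  ∀ φ : G.E → Γ, ∃ c : G.V → Γ, ∀ e : G.E, c (G.tgt e) - c (G.src e) ≠ φ e

/-- Any two vertices of `G` can be joined by a walk avoiding the edges of `D`. -/
def ConnectedAvoiding (G : Multigraph) (D : Set G.E) : Prop :=
  ∀ u v : G.V, Relation.ReflTransGen
    (fun a b => ∃ e : G.E, e ∉ D ∧
      ((G.src e = a ∧ G.tgt e = b) ∨ (G.src e = b ∧ G.tgt e = a))) u v

/-- `G` is connected and stays connected after deleting any single edge. -/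
def TwoEdgeConnected (G : Multigraph) : Prop :=
  ∀ D : Finset G.E, D.card ≤ 1 → G.ConnectedAvoiding ↑D

/-- `G` is connected and stays connected after deleting any two edges. -/
def ThreeEdgeConnected (G : Multigraph) : Prop :=
  ∀ D : Finset G.E, D.card ≤ 2 → G.ConnectedAvoiding ↑D

/-- A cycle in a multigraph: cyclically arranged distinct vertices joined by
distinct edges; since there are no loops, a cycle has length at least `2`. -/
structure Cycle (G : Multigraph) where
  n : ℕ
  two_le : 2 ≤ n
  verts : ZMod n → G.V
  edges : ZMod n → G.E
  vinj : Function.Injective verts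
  einj : Function.Injective edges
  compat : ∀ i : ZMod n,
    (G.src (edges i) = verts i ∧ G.tgt (edges i) = verts (i + 1)) ∨
    (G.src (edges i) = verts (i + 1) ∧ G.tgt (edges i) = verts i)

/-- Two edges are cycle-equivalent if every cycle containing one of them contains the other. -/
def CycleEquiv (G : Multigraph) (e₁ e₂ : G.E) : Prop :=
  ∀ C : G.Cycle, e₁ ∈ Set.range C.edges ↔ e₂ ∈ Set.range C.edges

/-- The cyclicity `q(G)` : the size of a largest cycle-equivalence class. -/
noncomputable def cyclicity (G : Multigraph) : ℕ :=
  Finset.univ.sup fun e : G.E => Nat.card {e' : G.E // G.CycleEquiv e e'}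

/-- The degree of a vertex (no loops, so each incident edge counts once). -/
noncomputable def degree (G : Multigraph) (v : G.V) : ℕ :=
  Nat.card {e : G.E // G.src e = v ∨ G.tgt e = v}

/-- The graph `G - v` obtained by deleting the vertex `v` and all incident edges. -/
def deleteVertex (G : Multigraph) (v : G.V) : Multigraph where
  V := {u : G.V // u ≠ v}
  E := {e : G.E // G.src e ≠ v ∧ G.tgt e ≠ v}
  vFintype := inferInstance
  eFintype := inferInstance
  vDecEq := inferInstance
  eDecEq := inferInstance
  src := fun e => ⟨G.src e.1, e.2.1⟩
  tgt := fun e => ⟨G.tgt e.1, e.2.2⟩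
  no_loop := fun e h => G.no_loop e.1 (congrArg Subtype.val h)

/-- The out-degree of `v` in the orientation of `G` obtained by re-orienting according
to `σ` (edge `e` keeps its direction if `σ e = true`, and is reversed otherwise). -/
noncomputable def outDeg (G : Multigraph) (σ : G.E → Bool) (v : G.V) : ℕ :=
  Nat.card {e : G.E // (σ e = true ∧ G.src e = v) ∨ (σ e = false ∧ G.tgt e = v)}

/-- A set of edges is a spanning tree if it connects all vertices and contains no cycle. -/
def IsSpanningTree (G : Multigraph) (T : Set G.E) : Prop :=
  G.ConnectedAvoiding Tᶜ ∧ ∀ C : G.Cycle, ¬ (Set.range C.edges ⊆ T)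

end Multigraph

/-- The graph `G_{q,k}` : two vertices `s = Sum.inl 0` and `t = Sum.inl 1` joined by
`q` internally disjoint paths, each of length `k`; edge `(i, j)` is the `j`-th edge
of the `i`-th path, directed from `s` towards `t`. -/
def pathsGraph (q k : ℕ) : Multigraph where
  V := Sum (Fin 2) (Fin q × Fin (k - 1))
  E := Fin q × Fin k
  vFintype := inferInstance
  eFintype := inferInstance
  vDecEq := inferInstance
  eDecEq := inferInstance
  src := fun p =>
    if h : (p.2 : ℕ) = 0 then Sum.inl 0
    else Sum.inr (p.1, ⟨(p.2 : ℕ) - 1, by have := p.2.isLt; omega⟩)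
  tgt := fun p =>
    if h : (p.2 : ℕ) = k - 1 then Sum.inl 1
    else Sum.inr (p.1, ⟨(p.2 : ℕ), by have := p.2.isLt; omega⟩)
  no_loop := by
    rintro ⟨i, j⟩ h
    dsimp only at h
    split_ifs at h with h0 h1 h1 <;>
      first
      | exact absurd (Sum.inl.inj h) (by decide)
      | exact Sum.noConfusion h
      | · have h2 := congrArg Fin.val (congrArg Prod.snd (Sum.inr.inj h))
          simp only at h2
          omega

/-- The simple sum `Π'` of a finite subset `Π` of an abelian group: all elements of the
form `α₁a₁ + ⋯ + αₖaₖ` where `Π = {a₁, …, aₖ}` and each `αᵢ ∈ {0, 1, -1}`. -/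
def simpleSum {Γ : Type} [AddCommGroup Γ] (S : Finset Γ) : Set Γ :=
  {x | ∃ α : Γ → ℤ, (∀ a, α a = 0 ∨ α a = 1 ∨ α a = -1) ∧ x = ∑ a ∈ S, α a • a}

/-!
Let `H = {x | x 0 = 0}`, a subgroup of order `2^(k-1)`, the common length of the paths. Prescribe at
the interior vertices of every path the successive differences of an enumeration `s` of `H`, and
zero at the source. A flow realising this takes the values `f(i,0) + (s j - s 0)` along path `i`,
so it runs through the whole coset `f(i,0) + H`; being nowhere zero forces `f(i,0) ∉ H`, i.e.
`f(i,0) 0 = 1`. But the net flow `∑ i, f(i,0)` at the source must vanish, while its first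
coordinate is `q = 1` in `ZMod 2`.
-/

theorem Multigraph.GroupConnected.exists_netFlow_eq_of_ne {G : Multigraph} {Γ : Type}
    [AddCommGroup Γ] (hG : G.GroupConnected Γ) (β : G.V → Γ) (t : G.V) :
    ∃ f : G.E → Γ, (∀ e, f e ≠ 0) ∧ ∀ v, v ≠ t → G.netFlow f v = β v := by
  obtain ⟨f, hf, hflow⟩ :=
    hG (β - Pi.single t (∑ v, β v)) (by simp [Finset.sum_sub_distrib])
  exact ⟨f, hf, fun v hv => by simp [hflow, Pi.single_eq_of_ne hv]⟩

namespace pathsGraph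

variable {q m : ℕ}

lemma src_eq_inl_zero_iff (e : (pathsGraph q m).E) :
    (pathsGraph q m).src e = Sum.inl 0 ↔ (e.2 : ℕ) = 0 := by
  obtain ⟨i, j⟩ := e
  simp only [pathsGraph]
  split_ifs with h <;> simp [h]

lemma tgt_ne_inl_zero (e : (pathsGraph q m).E) : (pathsGraph q m).tgt e ≠ Sum.inl 0 := by
  obtain ⟨i, j⟩ := e
  simp only [pathsGraph]
  split_ifs <;> simp

lemma src_eq_inr_iff (e : (pathsGraph q m).E) (i : Fin q) (j : Fin (m - 1)) :
    (pathsGraph q m).src e = Sum.inr (i, j) ↔ e = (i, ⟨j + 1, by omega⟩) := by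
  obtain ⟨i', j'⟩ := e
  simp only [pathsGraph]
  split_ifs with h
  · simp only [false_iff, Prod.mk.injEq, Fin.ext_iff]
    omega
  · simp only [Sum.inr.injEq, Prod.mk.injEq, Fin.ext_iff]
    omega

lemma tgt_eq_inr_iff (e : (pathsGraph q m).E) (i : Fin q) (j : Fin (m - 1)) :
    (pathsGraph q m).tgt e = Sum.inr (i, j) ↔ e = (i, ⟨j, by omega⟩) := by
  obtain ⟨i', j'⟩ := e
  simp only [pathsGraph]
  split_ifs with h
  · simp only [false_iff, Prod.mk.injEq, Fin.ext_iff]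
    omega
  · simp only [Sum.inr.injEq, Prod.mk.injEq, Fin.ext_iff]

variable {Γ : Type} [AddCommGroup Γ]

lemma netFlow_inl_zero (f : (pathsGraph q m).E → Γ) (hm : 0 < m) :
    (pathsGraph q m).netFlow f (Sum.inl 0) = ∑ i : Fin q, f (i, ⟨0, hm⟩) := by
  simp only [Multigraph.netFlow, tgt_ne_inl_zero, if_false, Finset.sum_const_zero, sub_zero,
    src_eq_inl_zero_iff]
  refine (Fintype.sum_prod_type _).trans (Fintype.sum_congr _ _ fun i => ?_)
  refine (Fintype.sum_eq_single ⟨0, hm⟩ fun j hj => if_neg ?_).trans (if_pos rfl)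
  exact fun h => hj (Fin.ext h)

lemma netFlow_inr (f : (pathsGraph q m).E → Γ) (i : Fin q) (j : Fin (m - 1)) :
    (pathsGraph q m).netFlow f (Sum.inr (i, j)) =
      f (i, ⟨j + 1, by omega⟩) - f (i, ⟨j, by omega⟩) := by
  unfold Multigraph.netFlow
  congr 1
  · refine (Fintype.sum_eq_single _ fun e he => if_neg ?_).trans
      (if_pos ((src_eq_inr_iff _ i j).2 rfl))
    exact mt (src_eq_inr_iff e i j).1 he
  · refine (Fintype.sum_eq_single _ fun e he => if_neg ?_).trans
      (if_pos ((tgt_eq_inr_iff _ i j).2 rfl))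
    exact mt (tgt_eq_inr_iff e i j).1 he

lemma apply_eq_of_netFlow_inr {f : (pathsGraph q m).E → Γ} {s : ℕ → Γ}
    (hf : ∀ i (j : Fin (m - 1)), (pathsGraph q m).netFlow f (Sum.inr (i, j)) = s (j + 1) - s j)
    (i : Fin q) {j : ℕ} (hj : j < m) :
    f (i, ⟨j, hj⟩) = f (i, ⟨0, by omega⟩) + (s j - s 0) := by
  induction j with
  | zero => rw [sub_self, add_zero]
  | succ j ih =>
    have step := (netFlow_inr f i ⟨j, by omega⟩).symm.trans (hf i ⟨j, by omega⟩)
    rw [sub_eq_iff_eq_add.1 step, ih]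
    abel

theorem exists_notMem_sum_eq_zero_of_groupConnected (hG : (pathsGraph q m).GroupConnected Γ)
    (H : AddSubgroup Γ) (hH : Nat.card H = m) (hm : 0 < m) :
    ∃ a : Fin q → Γ, (∀ i, a i ∉ H) ∧ ∑ i, a i = 0 := by
  subst hH
  let enum := (Nat.equivFinOfCardPos hm.ne').symm
  let s : ℕ → Γ := fun j => if hj : j < Nat.card H then (enum ⟨j, hj⟩ : Γ) else 0
  have hs_surj : ∀ x ∈ H, ∃ j, ∃ hj : j < Nat.card H, s j = x := fun x hx =>
    ⟨enum.symm ⟨x, hx⟩, (enum.symm ⟨x, hx⟩).isLt, by simp [s]⟩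
  have hs_mem : ∀ j, s j ∈ H := fun j => by unfold s; split_ifs <;> simp
  obtain ⟨f, hf, hflow⟩ := hG.exists_netFlow_eq_of_ne
    (Sum.elim 0 fun p => s (p.2 + 1) - s p.2) (Sum.inl 1)
  refine ⟨fun i => f (i, ⟨0, hm⟩), fun i hi => ?_, ?_⟩
  · obtain ⟨j, hj, hsj⟩ := hs_surj _ (H.sub_mem (hs_mem 0) hi)
    apply hf (i, ⟨j, hj⟩)
    rw [apply_eq_of_netFlow_inr (fun i j => hflow _ Sum.inr_ne_inl) i hj, hsj]
    abel
  · exact (netFlow_inl_zero f hm).symm.trans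
      (hflow (Sum.inl 0) (Sum.inl_injective.ne zero_ne_one))

end pathsGraph

theorem not_groupConnected_pathsGraph_of_card_ker {Γ : Type} [AddCommGroup Γ] {q m : ℕ}
    (φ : Γ →+ ZMod 2) (hφ : Nat.card φ.ker = m) (hm : 0 < m) (hq : Odd q) :
    ¬ (pathsGraph q m).GroupConnected Γ := by
  intro hG
  obtain ⟨a, ha, hsum⟩ :=
    pathsGraph.exists_notMem_sum_eq_zero_of_groupConnected hG φ.ker hφ hm
  have zmod_two_eq_one : ∀ x : ZMod 2, x ≠ 0 → x = 1 := by decide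
  have h_one : ∀ i, φ (a i) = 1 := fun i => zmod_two_eq_one _ (ha i)
  have h_image := congrArg φ hsum
  simp only [map_sum, h_one, Finset.sum_const, Finset.card_univ, Fintype.card_fin, map_zero,
    nsmul_eq_mul, mul_one, hq.natCast_zmod_two] at h_image
  exact one_ne_zero h_image

theorem card_ker_evalAddMonoidHom_zmod_two {k : ℕ} (i : Fin k) :
    Nat.card (Pi.evalAddMonoidHom (fun _ => ZMod 2) i).ker = 2 ^ (k - 1) := by
  have h := AddSubgroup.card_mul_index (Pi.evalAddMonoidHom (fun _ : Fin k => ZMod 2) i).ker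
  rw [AddSubgroup.index_ker, AddMonoidHom.range_eq_top.2 (Function.surjective_eval i),
    AddSubgroup.card_top, Nat.card_fun, Nat.card_zmod, Nat.card_fin] at h
  obtain ⟨n, rfl⟩ := Nat.exists_eq_add_one_of_ne_zero i.pos.ne'
  rw [pow_succ] at h
  simpa using Nat.eq_of_mul_eq_mul_right two_pos h

/-- For every natural number `k ≥ 1` and every odd natural number `q`,
the graph `G_{q, 2^(k-1)}` is not `(ℤ₂)^k`-connected. -/
theorem statement0 (k : ℕ) (hk : 1 ≤ k) (q : ℕ) (hq : Odd q) :
    ¬ (pathsGraph q (2 ^ (k - 1))).GroupConnected (Fin k → ZMod 2) :=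
  not_groupConnected_pathsGraph_of_card_ker (Pi.evalAddMonoidHom _ ⟨0, hk⟩)
    (card_ker_evalAddMonoidHom_zmod_two _) (by positivity) hq
end

section
/- If a 2-edge-connected graph G is Γ-connected for a finite abelian group Γ, then |Γ| > q(G), where q(G) denotes the cyclicity of G. -/
/-!
Let `e ≠ e₀` be cycle-equivalent edges and let `S` be the set of vertices reachable from the tail
of `e₀` without using `e₀` or `e`. The head of `e₀` is not in `S` (a path to it would close a cycle
through `e₀` avoiding `e`), and `e` has exactly one end in `S` (otherwise `e₀` would be a bridge).
So `e₀` and `e` are the only edges leaving or entering `S`, and for every `f : E → Γ` the net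
out-flow of `S` is `f e₀ ± f e`, a quantity that depends only on the boundary of `f`.

If the class of `e₀` had at least `|Γ|` edges, label them onto `Γ` with `e₀` labelled `0`, and
take as boundary that of a function `g` vanishing at `e₀` for which the net out-flow of the set
`S` of each `e` is the label of `e`. A nowhere-zero `f` with this boundary has `f e₀ ≠ 0`, which is
the label of some `e ≠ e₀`, and then `f e = 0`.
-/

theorem ZMod.val_add_one {n : ℕ} [NeZero n] (i : ZMod n) : (i + 1).val = (i.val + 1) % n := by
  rcases eq_or_ne n 1 with rfl | hn
  · have := (i + 1).val_lt
    omega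
  · rw [ZMod.val_add, ZMod.val_one'' hn]

namespace Multigraph

variable {G : Multigraph} {Γ : Type} [AddCommGroup Γ]

def Joins (G : Multigraph) (d : G.E) (a b : G.V) : Prop :=
  (G.src d = a ∧ G.tgt d = b) ∨ (G.src d = b ∧ G.tgt d = a)

lemma Joins.eq_or_eq {d : G.E} {a b a' b' : G.V} (h : G.Joins d a b) (h' : G.Joins d a' b') :
    (a = a' ∧ b = b') ∨ (a = b' ∧ b = a') := by
  rcases h with ⟨rfl, rfl⟩ | ⟨rfl, rfl⟩ <;> rcases h' with ⟨rfl, rfl⟩ | ⟨rfl, rfl⟩ <;> simp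

def AdjAvoiding (G : Multigraph) (D : Set G.E) (a b : G.V) : Prop :=
  ∃ d ∉ D, G.Joins d a b

def graphAvoiding (G : Multigraph) (D : Set G.E) : SimpleGraph G.V where
  Adj := G.AdjAvoiding D
  symm := ⟨fun _ _ ⟨d, hd, h⟩ => ⟨d, hd, h.symm⟩⟩
  loopless := ⟨fun _ ⟨d, _, h⟩ => by
    rcases h with ⟨h₁, h₂⟩ | ⟨h₁, h₂⟩ <;> exact G.no_loop d (h₁.trans h₂.symm)⟩

lemma eq_of_joins_getVert {D : Set G.E} {u v : G.V} {p : (G.graphAvoiding D).Walk u v}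
    (hp : p.IsPath) {d : G.E} {i j : ℕ} (hi : i < p.length) (hj : j < p.length)
    (hdi : G.Joins d (p.getVert i) (p.getVert (i + 1)))
    (hdj : G.Joins d (p.getVert j) (p.getVert (j + 1))) : i = j := by
  rcases hdi.eq_or_eq hdj with ⟨h, -⟩ | ⟨h₁, h₂⟩
  · exact hp.getVert_injOn hi.le hj.le h
  · have := hp.getVert_injOn (hi.le : i ≤ p.length) (hj : j + 1 ≤ p.length) h₁
    have := hp.getVert_injOn (hi : i + 1 ≤ p.length) (hj.le : j ≤ p.length) h₂
    omega

lemma exists_cycle_of_isPath {D : Set G.E} {e₀ : G.E} (he₀ : e₀ ∈ D)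
    {p : (G.graphAvoiding D).Walk (G.src e₀) (G.tgt e₀)} (hp : p.IsPath) :
    ∃ C : G.Cycle, e₀ ∈ Set.range C.edges ∧ Set.range C.edges ⊆ insert e₀ Dᶜ := by
  have hlen : p.length ≠ 0 := fun h => G.no_loop e₀ (p.eq_of_length_eq_zero h)
  have hadj : ∀ k (hk : k < p.length), ∃ d ∉ D, G.Joins d (p.getVert k) (p.getVert (k + 1)) :=
    fun k hk => p.adj_getVert_succ hk
  choose pathEdge hpathEdge hjoins using hadj
  have : NeZero (p.length + 1) := ⟨by omega⟩
  let verts : ZMod (p.length + 1) → G.V := fun i => p.getVert i.val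
  let edges : ZMod (p.length + 1) → G.E := fun i =>
    if h : i.val < p.length then pathEdge i.val h else e₀
  have hle : ∀ i : ZMod (p.length + 1), i.val ≤ p.length := fun i => Nat.lt_succ_iff.1 i.val_lt
  have hlast : ∀ i : ZMod (p.length + 1), ¬ i.val < p.length → i.val = p.length := fun i h =>
    le_antisymm (hle i) (not_lt.1 h)
  refine ⟨⟨p.length + 1, by omega, verts, edges, ?_, ?_, ?_⟩, ?_, ?_⟩
  · exact fun i j h => ZMod.val_injective _ (hp.getVert_injOn (hle i) (hle j) h)
  · intro i j h
    simp only [edges] at h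
    split_ifs at h with hi hj hj
    · exact ZMod.val_injective _ (eq_of_joins_getVert hp hi hj (hjoins _ hi) (h ▸ hjoins _ hj))
    · exact absurd he₀ (h ▸ hpathEdge _ hi)
    · exact absurd he₀ (h ▸ hpathEdge _ hj)
    · exact ZMod.val_injective _ ((hlast i hi).trans (hlast j hj).symm)
  · intro i
    simp only [edges, verts]
    split_ifs with hi
    · rw [ZMod.val_add_one, Nat.mod_eq_of_lt (by omega)]
      exact hjoins _ hi
    · rw [ZMod.val_add_one, hlast i hi, Nat.mod_self, p.getVert_length, p.getVert_zero]
      exact Or.inr ⟨rfl, rfl⟩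
  · refine ⟨(p.length : ZMod (p.length + 1)), ?_⟩
    have : (p.length : ZMod (p.length + 1)).val = p.length := ZMod.val_cast_of_lt (by omega)
    simp [edges, this]
  · rintro _ ⟨i, rfl⟩
    simp only [edges]
    split_ifs with hi
    · exact Or.inr (hpathEdge _ hi)
    · exact Or.inl rfl

def coboundary (G : Multigraph) (χ : G.V → ℤ) (d : G.E) : ℤ := χ (G.src d) - χ (G.tgt d)

lemma sum_smul_netFlow (χ : G.V → ℤ) (f : G.E → Γ) :
    ∑ v, χ v • G.netFlow f v = ∑ d, G.coboundary χ d • f d := by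
  simp only [netFlow, coboundary, smul_sub, sub_smul, Finset.smul_sum, smul_ite, smul_zero,
    Finset.sum_sub_distrib]
  rw [Finset.sum_comm, Finset.sum_comm (s := Finset.univ (α := G.V))]
  simp

lemma sum_netFlow (f : G.E → Γ) : ∑ v, G.netFlow f v = 0 := by
  simpa [coboundary] using G.sum_smul_netFlow 1 f

def cutSide (G : Multigraph) (e₀ e : G.E) : Set G.V :=
  {v | Relation.ReflTransGen (G.AdjAvoiding {e₀, e}) (G.src e₀) v}

noncomputable def cutPotential (G : Multigraph) (e₀ e : G.E) : G.V → ℤ :=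
  (G.cutSide e₀ e).indicator 1

section cutSide

variable {e₀ e : G.E}

lemma src_mem_cutSide : G.src e₀ ∈ G.cutSide e₀ e := Relation.ReflTransGen.refl

lemma src_mem_cutSide_iff_tgt {d : G.E} (hd₀ : d ≠ e₀) (hd : d ≠ e) :
    G.src d ∈ G.cutSide e₀ e ↔ G.tgt d ∈ G.cutSide e₀ e := by
  have hdD : d ∉ ({e₀, e} : Set G.E) := by simp [hd₀, hd]
  exact ⟨fun h => h.tail ⟨d, hdD, Or.inl ⟨rfl, rfl⟩⟩, fun h => h.tail ⟨d, hdD, Or.inr ⟨rfl, rfl⟩⟩⟩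

lemma tgt_notMem_cutSide (hne : e ≠ e₀) (hcy : G.CycleEquiv e₀ e) :
    G.tgt e₀ ∉ G.cutSide e₀ e := by
  intro h
  obtain ⟨p⟩ : (G.graphAvoiding {e₀, e}).Reachable (G.src e₀) (G.tgt e₀) :=
    (SimpleGraph.reachable_iff_reflTransGen _ _).2 h
  obtain ⟨C, he₀C, hC⟩ := G.exists_cycle_of_isPath (by simp) p.toPath.2
  rcases hC ((hcy C).1 he₀C) with h | h
  · exact hne h
  · exact h (by simp)

lemma not_src_mem_cutSide_iff_tgt (hG : G.TwoEdgeConnected) (hne : e ≠ e₀)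
    (hcy : G.CycleEquiv e₀ e) : ¬(G.src e ∈ G.cutSide e₀ e ↔ G.tgt e ∈ G.cutSide e₀ e) := by
  intro he
  have hclosed : ∀ {d a b}, d ≠ e₀ → G.Joins d a b → a ∈ G.cutSide e₀ e → b ∈ G.cutSide e₀ e := by
    intro d a b hd₀ hjoin ha
    have hd : G.src d ∈ G.cutSide e₀ e ↔ G.tgt d ∈ G.cutSide e₀ e := by
      by_cases hde : d = e
      · exact hde ▸ he
      · exact src_mem_cutSide_iff_tgt hd₀ hde
    rcases hjoin with ⟨rfl, rfl⟩ | ⟨rfl, rfl⟩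
    exacts [hd.1 ha, hd.2 ha]
  suffices ∀ v, Relation.ReflTransGen (G.AdjAvoiding {e₀}) (G.src e₀) v → v ∈ G.cutSide e₀ e by
    have hreach := hG {e₀} (by simp) (G.src e₀) (G.tgt e₀)
    rw [Finset.coe_singleton] at hreach
    exact tgt_notMem_cutSide hne hcy (this _ hreach)
  intro v hv
  induction hv with
  | refl => exact src_mem_cutSide
  | tail _ hstep ih =>
    obtain ⟨d, hd₀, hjoin⟩ := hstep
    exact hclosed hd₀ hjoin ih

lemma coboundary_cutPotential_of_ne {d : G.E} (hd₀ : d ≠ e₀) (hd : d ≠ e) :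
    G.coboundary (G.cutPotential e₀ e) d = 0 := by
  by_cases h : G.src d ∈ G.cutSide e₀ e
  · simp [coboundary, cutPotential, h, (src_mem_cutSide_iff_tgt hd₀ hd).1 h]
  · simp [coboundary, cutPotential, h, (src_mem_cutSide_iff_tgt hd₀ hd).not.1 h]

lemma coboundary_cutPotential_self (hne : e ≠ e₀) (hcy : G.CycleEquiv e₀ e) :
    G.coboundary (G.cutPotential e₀ e) e₀ = 1 := by
  simp [coboundary, cutPotential, src_mem_cutSide, tgt_notMem_cutSide hne hcy]

lemma coboundary_cutPotential_mul_self (hG : G.TwoEdgeConnected) (hne : e ≠ e₀)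
    (hcy : G.CycleEquiv e₀ e) :
    G.coboundary (G.cutPotential e₀ e) e * G.coboundary (G.cutPotential e₀ e) e = 1 := by
  have h := not_src_mem_cutSide_iff_tgt hG hne hcy
  by_cases hs : G.src e ∈ G.cutSide e₀ e <;> by_cases ht : G.tgt e ∈ G.cutSide e₀ e <;>
    simp_all [coboundary, cutPotential]

lemma sum_cutPotential_smul_netFlow (hne : e ≠ e₀) (hcy : G.CycleEquiv e₀ e) (f : G.E → Γ) :
    ∑ v, G.cutPotential e₀ e v • G.netFlow f v =
      f e₀ + G.coboundary (G.cutPotential e₀ e) e • f e := by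
  rw [sum_smul_netFlow, Fintype.sum_eq_add e₀ e hne.symm fun d hd => by
    rw [coboundary_cutPotential_of_ne hd.1 hd.2, zero_smul], coboundary_cutPotential_self hne hcy,
    one_smul]

end cutSide

theorem card_cycleEquiv_lt [Fintype Γ] (hG : G.TwoEdgeConnected) (h : G.GroupConnected Γ)
    (e₀ : G.E) :
    Nat.card {e // G.CycleEquiv e₀ e} < Fintype.card Γ := by
  classical
  by_contra! hle
  obtain ⟨φ, hφ⟩ : ∃ φ : {e // G.CycleEquiv e₀ e} → Γ, φ.Surjective := by
    refine Function.exists_surjective_iff.2 ⟨⟨0⟩, Function.Embedding.nonempty_of_card_le ?_⟩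
    simpa only [Nat.card_eq_fintype_card] using hle
  let label : G.E → Γ := Function.extend Subtype.val φ 0
  have hlabel (e : {e // G.CycleEquiv e₀ e}) : label e = φ e :=
    Subtype.val_injective.extend_apply φ 0 e
  let c (e : G.E) : ℤ := G.coboundary (G.cutPotential e₀ e) e
  -- `c e = ±1`, so under `g` the net out-flow of `G.cutSide e₀ e` is `label e - label e₀`.
  let g (e : G.E) : Γ := c e • (label e - label e₀)
  obtain ⟨f, hf0, hf⟩ := h (G.netFlow g) (G.sum_netFlow g)
  obtain ⟨⟨e, hcy⟩, he⟩ := hφ (f e₀ + label e₀)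
  rw [← hlabel] at he
  have hne : e ≠ e₀ := by
    rintro rfl
    exact hf0 e (by simpa using he)
  have hc : c e * c e = 1 := coboundary_cutPotential_mul_self hG hne hcy
  have key : f e₀ + c e • f e = f e₀ := by
    calc f e₀ + c e • f e = ∑ v, G.cutPotential e₀ e v • G.netFlow f v :=
          (sum_cutPotential_smul_netFlow hne hcy f).symm
      _ = ∑ v, G.cutPotential e₀ e v • G.netFlow g v := by simp only [hf]
      _ = g e₀ + c e • g e := sum_cutPotential_smul_netFlow hne hcy g
      _ = f e₀ := by simp [g, smul_smul, hc, he]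
  apply hf0 e
  rw [← one_smul ℤ (f e), ← hc, mul_smul, add_eq_left.1 key, smul_zero]

end Multigraph

/-- If a 2-edge-connected graph `G` is `Γ`-connected for a finite abelian
group `Γ`, then `|Γ| > q(G)`, where `q(G)` is the cyclicity of `G`. -/
theorem statement3 (G : Multigraph) (hG : G.TwoEdgeConnected)
    (Γ : Type) [AddCommGroup Γ] [Fintype Γ] (h : G.GroupConnected Γ) :
    G.cyclicity < Fintype.card Γ :=
  (Finset.sup_lt_iff Fintype.card_pos).2 fun e₀ _ => G.card_cycleEquiv_lt hG h e₀
end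

section
/- If a graph G is ℤ₃-colorable, then G is 5-degenerate, i.e., every subgraph of G with at least one vertex contains a vertex of degree at most 5. Consequently, G is Γ-colorable for every finite abelian group Γ with |Γ| ≥ 6. -/
namespace Multigraph

open Finset

variable {Γ : Type} [AddCommGroup Γ]

def IsDegenerate (G : Multigraph) (d : ℕ) : Prop :=
  ∀ (S : Set G.V) (T : Set G.E), (∀ e ∈ T, G.src e ∈ S ∧ G.tgt e ∈ S) → S.Nonempty →
    ∃ v ∈ S, Nat.card {e : G.E // e ∈ T ∧ (G.src e = v ∨ G.tgt e = v)} ≤ d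

noncomputable def subgraph (G : Multigraph) {S : Set G.V} {T : Set G.E}
    (hST : ∀ e ∈ T, G.src e ∈ S ∧ G.tgt e ∈ S) : Multigraph where
  V := S
  E := T
  vFintype := Fintype.ofFinite S
  eFintype := Fintype.ofFinite T
  vDecEq := inferInstance
  eDecEq := inferInstance
  src e := ⟨G.src e, (hST e e.2).1⟩
  tgt e := ⟨G.tgt e, (hST e e.2).2⟩
  no_loop e h := G.no_loop e (congrArg Subtype.val h)

section Subgraph

variable (G : Multigraph) {S : Set G.V} {T : Set G.E}
  (hST : ∀ e ∈ T, G.src e ∈ S ∧ G.tgt e ∈ S)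

theorem degree_subgraph (v : S) :
    (G.subgraph hST).degree v = Nat.card {e : G.E // e ∈ T ∧ (G.src e = v ∨ G.tgt e = v)} :=
  Nat.card_congr <| (Equiv.subtypeEquivRight fun _ => by simp [subgraph, Subtype.ext_iff]).trans
    (Equiv.subtypeSubtypeEquivSubtypeInter (· ∈ T) fun e => G.src e = v ∨ G.tgt e = v)

variable {G} in
theorem GroupColorable.subgraph (h : G.GroupColorable Γ) : (G.subgraph hST).GroupColorable Γ := by
  classical
  intro φ
  obtain ⟨c, hc⟩ := h fun e => if he : e ∈ T then φ ⟨e, he⟩ else 0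
  refine ⟨fun v : S => c v, fun e : T => ?_⟩
  have hce := hc e
  rwa [dif_pos e.2] at hce

end Subgraph

theorem sum_degree_eq_two_mul_card_edges (G : Multigraph) :
    ∑ v, G.degree v = 2 * Fintype.card G.E := by
  classical
  have hdeg (v : G.V) : G.degree v = #{e | G.src e = v ∨ G.tgt e = v} := by
    rw [degree, Nat.card_eq_fintype_card, Fintype.card_subtype]
  have hends (e : G.E) : #{v | G.src e = v ∨ G.tgt e = v} = 2 := by
    rw [filter_or, filter_eq, filter_eq, if_pos (mem_univ _), if_pos (mem_univ _),
      singleton_union, card_pair (G.no_loop e)]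
  simp_rw [hdeg]
  calc ∑ v, #{e | G.src e = v ∨ G.tgt e = v}
      = ∑ e, #{v | G.src e = v ∨ G.tgt e = v} :=
        sum_card_bipartiteAbove_eq_sum_card_bipartiteBelow _
    _ = 2 * Fintype.card G.E := by simp [hends, mul_comm]

/-- Every forbidding function `φ` is `c (tgt e) - c (src e) + ψ e` for a vertex coloring `c`
and a nowhere-zero `ψ`. -/
theorem GroupColorable.card_pow_le [Fintype Γ] {G : Multigraph} (h : G.GroupColorable Γ) :
    Fintype.card Γ ^ Fintype.card G.E ≤
      Fintype.card Γ ^ Fintype.card G.V * (Fintype.card Γ - 1) ^ Fintype.card G.E := by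
  classical
  have hsurj : Function.Surjective fun p : (G.V → Γ) × (G.E → {x : Γ // x ≠ 0}) =>
      fun e => p.1 (G.tgt e) - p.1 (G.src e) + p.2 e := by
    intro φ
    obtain ⟨c, hc⟩ := h φ
    refine ⟨⟨c, fun e => ⟨φ e - (c (G.tgt e) - c (G.src e)), sub_ne_zero.mpr (hc e).symm⟩⟩, ?_⟩
    funext e
    simp
  simpa [Fintype.card_subtype_compl] using Fintype.card_le_of_surjective _ hsurj

theorem three_pow_mul_two_pow_lt {s t : ℕ} (hs : s ≠ 0) (hst : 3 * s ≤ t) :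
    3 ^ s * 2 ^ t < 3 ^ t := by
  obtain ⟨u, rfl⟩ := Nat.exists_eq_add_of_le hst
  calc 3 ^ s * 2 ^ (3 * s + u) = 24 ^ s * 2 ^ u := by
        rw [pow_add, pow_mul, show 24 = 3 * 2 ^ 3 by norm_num, mul_pow]; ring
    _ < 27 ^ s * 3 ^ u :=
      Nat.mul_lt_mul_of_lt_of_le (Nat.pow_lt_pow_left (by norm_num) hs)
        (Nat.pow_le_pow_left (by norm_num) u) (by positivity)
    _ = 3 ^ (3 * s + u) := by rw [pow_add, pow_mul]; norm_num

theorem isDegenerate_five_of_groupColorable_zmod_three {G : Multigraph}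
    (h : G.GroupColorable (ZMod 3)) : G.IsDegenerate 5 := by
  intro S T hST hS
  by_contra! hdeg
  let H := G.subgraph hST
  have hcount : 3 ^ Fintype.card H.E ≤ 3 ^ Fintype.card H.V * 2 ^ Fintype.card H.E :=
    (h.subgraph hST).card_pow_le
  have hmin : 6 * Fintype.card H.V ≤ 2 * Fintype.card H.E :=
    calc 6 * Fintype.card H.V = ∑ _v : H.V, 6 := by simp [mul_comm]
      _ ≤ ∑ v, H.degree v :=
        sum_le_sum fun (v : S) _ => (G.degree_subgraph hST v).symm ▸ hdeg v v.2
      _ = 2 * Fintype.card H.E := H.sum_degree_eq_two_mul_card_edges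
  have : Nonempty H.V := hS.to_subtype
  exact (three_pow_mul_two_pow_lt Fintype.card_ne_zero (by omega)).not_ge hcount

theorem IsDegenerate.exists_degree_le {G : Multigraph} {d : ℕ} (hG : G.IsDegenerate d)
    [Nonempty G.V] : ∃ v, G.degree v ≤ d := by
  obtain ⟨v, -, hv⟩ := hG Set.univ Set.univ (fun _ _ => ⟨trivial, trivial⟩) Set.univ_nonempty
  exact ⟨v, by simpa only [degree, Set.mem_univ, true_and] using hv⟩

theorem IsDegenerate.deleteVertex {G : Multigraph} {d : ℕ} (hG : G.IsDegenerate d) (v : G.V) :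
    (G.deleteVertex v).IsDegenerate d := by
  intro S T hST hS
  obtain ⟨_, ⟨u, hu, rfl⟩, hdeg⟩ := hG (Subtype.val '' S) (Subtype.val '' T)
    (by
      rintro _ ⟨e, he, rfl⟩
      exact ⟨⟨_, (hST e he).1, rfl⟩, ⟨_, (hST e he).2, rfl⟩⟩)
    (hS.image _)
  refine ⟨u, hu, le_trans (Nat.card_le_card_of_injective
    (fun e => ⟨e.1.1, ⟨e.1, e.2.1, rfl⟩, e.2.2.imp (congrArg Subtype.val) (congrArg Subtype.val)⟩)
    fun _ _ he => Subtype.ext <| Subtype.ext <| by simpa using he) hdeg⟩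

theorem GroupColorable.of_deleteVertex [Fintype Γ] {G : Multigraph} (v : G.V)
    (hv : G.degree v < Fintype.card Γ) (h : (G.deleteVertex v).GroupColorable Γ) :
    G.GroupColorable Γ := by
  classical
  intro φ
  obtain ⟨c', hc'⟩ := h fun e => φ e.1
  let c₀ : G.V → Γ := fun u => if hu : u = v then 0 else c' ⟨u, hu⟩
  have hc₀ (u : G.V) (hu : u ≠ v) : c₀ u = c' ⟨u, hu⟩ := dif_neg hu
  -- the color of `v` that the edge `e` forbids
  let forb : {e : G.E // G.src e = v ∨ G.tgt e = v} → Γ := fun e =>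
    if G.src e.1 = v then c₀ (G.tgt e.1) - φ e.1 else c₀ (G.src e.1) + φ e.1
  obtain ⟨γ, hγ⟩ : ∃ γ, ∀ e, forb e ≠ γ := by
    by_contra! hsurj
    exact (Fintype.card_le_of_surjective forb hsurj).not_gt
      (by rwa [degree, Nat.card_eq_fintype_card] at hv)
  refine ⟨Function.update c₀ v γ, fun e => ?_⟩
  by_cases hs : G.src e = v
  · have ht : G.tgt e ≠ v := fun ht => G.no_loop e (hs.trans ht.symm)
    have hne := hγ ⟨e, Or.inl hs⟩
    simp only [forb, if_pos hs] at hne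
    rw [hs, Function.update_self, Function.update_of_ne ht]
    exact fun heq => hne (by rw [← heq]; abel)
  by_cases ht : G.tgt e = v
  · have hne := hγ ⟨e, Or.inr ht⟩
    simp only [forb, if_neg hs] at hne
    rw [ht, Function.update_self, Function.update_of_ne hs]
    exact fun heq => hne (by rw [← heq]; abel)
  rw [Function.update_of_ne hs, Function.update_of_ne ht, hc₀ _ hs, hc₀ _ ht]
  exact hc' ⟨e, hs, ht⟩

theorem IsDegenerate.groupColorable [Fintype Γ] {G : Multigraph} {d : ℕ}
    (hG : G.IsDegenerate d) (hΓ : d < Fintype.card Γ) : G.GroupColorable Γ := by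
  induction hn : Fintype.card G.V using Nat.strong_induction_on generalizing G with
  | _ n ih =>
  rcases isEmpty_or_nonempty G.V with hV | hV
  · exact fun _ => ⟨isEmptyElim, fun e => isEmptyElim (G.src e)⟩
  obtain ⟨v, hv⟩ := hG.exists_degree_le
  have hcard : Fintype.card (G.deleteVertex v).V < n :=
    hn ▸ Fintype.card_subtype_lt (p := (· ≠ v)) (not_not.mpr rfl)
  exact GroupColorable.of_deleteVertex v (hv.trans_lt hΓ) (ih _ hcard (hG.deleteVertex v) rfl)

end Multigraph

/-- If `G` is `ℤ₃`-colorable, then `G` is 5-degenerate (every subgraph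
with at least one vertex has a vertex of degree at most 5); consequently `G` is
`Γ`-colorable for every finite abelian group `Γ` with `|Γ| ≥ 6`. -/
theorem statement12 (G : Multigraph) (h : G.GroupColorable (ZMod 3)) :
    (∀ (S : Set G.V) (T : Set G.E),
        (∀ e ∈ T, G.src e ∈ S ∧ G.tgt e ∈ S) → S.Nonempty →
        ∃ v ∈ S, Nat.card {e : G.E // e ∈ T ∧ (G.src e = v ∨ G.tgt e = v)} ≤ 5) ∧
    (∀ (Γ : Type) [AddCommGroup Γ] [Fintype Γ],
        6 ≤ Fintype.card Γ → G.GroupColorable Γ) := by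
  have hG : G.IsDegenerate 5 := Multigraph.isDegenerate_five_of_groupColorable_zmod_three h
  exact ⟨hG, fun Γ _ _ hΓ => hG.groupColorable hΓ⟩
end

section
/- If a graph G with n vertices and m edges is ℤ₃-colorable, then 3ⁿ · 2ᵐ ≥ 3ᵐ; consequently m ≤ n · log(3)/log(3/2) < 2.8·n. -/
/-!
A coloring `c` for the forbidding function `φ` determines `φ` up to a nowhere-zero
function on the edges, namely `φ - δc` where `(δc) e = c (tgt e) - c (src e)`.
So `φ ↦ (c, φ - δc)` is injective, and there are at least as many pairs as forbidding
functions: `|Γ|^m ≤ |Γ|^n (|Γ| - 1)^m`. For `Γ = ℤ₃` this is `3^m ≤ 3^n 2^m`; taking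
logarithms gives the linear bound.
-/

open Real

namespace Multigraph

theorem GroupColorable.card_pow_card_edges_le {G : Multigraph} {Γ : Type} [AddCommGroup Γ]
    [Fintype Γ] (h : G.GroupColorable Γ) :
    Fintype.card Γ ^ Fintype.card G.E ≤
      Fintype.card Γ ^ Fintype.card G.V * (Fintype.card Γ - 1) ^ Fintype.card G.E := by
  classical
  choose c hc using h
  let encode (φ : G.E → Γ) : (G.V → Γ) × (G.E → {x : Γ // x ≠ 0}) :=
    (c φ, fun e => ⟨φ e - (c φ (G.tgt e) - c φ (G.src e)), sub_ne_zero.mpr (hc φ e).symm⟩)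
  have encode_injective : Function.Injective encode := by
    intro φ ψ hφψ
    obtain ⟨hcol, hdiff⟩ := Prod.ext_iff.mp hφψ
    funext e
    have he := congrArg Subtype.val (congrFun hdiff e)
    simp only [encode] at hcol he
    rw [hcol] at he
    exact sub_left_inj.mp he
  have card_ne_zero : Fintype.card {x : Γ // x ≠ 0} = Fintype.card Γ - 1 := by
    simp [Fintype.card_subtype_compl]
  simpa [Fintype.card_prod, Fintype.card_fun, card_ne_zero] using
    Fintype.card_le_of_injective encode encode_injective

end Multigraph

theorem le_mul_log_div_log_of_pow_le {a b : ℝ} (hb : 0 < b) (hba : b < a) {m n : ℕ}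
    (h : a ^ m ≤ a ^ n * b ^ m) : (m : ℝ) ≤ n * (log a / log (a / b)) := by
  have ha : 0 < a := hb.trans hba
  have hlog_pos : 0 < log (a / b) := log_pos ((one_lt_div hb).mpr hba)
  have hlog := log_le_log (by positivity) h
  rw [log_mul (by positivity) (by positivity), log_pow, log_pow, log_pow] at hlog
  rw [mul_div_assoc', le_div_iff₀ hlog_pos, log_div ha.ne' hb.ne']
  linarith

theorem log_three_div_log_three_halves_lt : log 3 / log (3 / 2) < 2.8 := by
  rw [div_lt_iff₀ (log_pos (by norm_num))]
  -- `2.8 = 14 / 5` and `3 ^ 5 = 243 < 291.9… = (3 / 2) ^ 14`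
  have h := log_lt_log (by positivity) (show (3 : ℝ) ^ 5 < (3 / 2) ^ 14 by norm_num)
  rw [log_pow, log_pow] at h
  push_cast at h
  linarith

/-- If a graph `G` with `n` vertices and `m` edges is `ℤ₃`-colorable, then
`3ⁿ·2ᵐ ≥ 3ᵐ`; consequently `m ≤ n·log(3)/log(3/2)`, where `log(3)/log(3/2) < 2.8`. -/
theorem statement13 (G : Multigraph) (h : G.GroupColorable (ZMod 3)) :
    3 ^ Fintype.card G.V * 2 ^ Fintype.card G.E ≥ 3 ^ Fintype.card G.E ∧
    (Fintype.card G.E : ℝ) ≤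
      (Fintype.card G.V : ℝ) * (Real.log 3 / Real.log (3 / 2)) ∧
    Real.log 3 / Real.log (3 / 2) < 2.8 := by
  have hcount : 3 ^ Fintype.card G.E ≤ 3 ^ Fintype.card G.V * 2 ^ Fintype.card G.E := by
    simpa using h.card_pow_card_edges_le
  refine ⟨hcount, ?_, log_three_div_log_three_halves_lt⟩
  exact le_mul_log_div_log_of_pow_le (by norm_num) (by norm_num) (by exact_mod_cast hcount)
end

section
/- If a graph G is ℤ₃-colorable, then G is ℤ₅-colorable. -/
/-!
Embed `ℤ₃` into `ℤ₅` as `{0, 1, 2}`. The differences of this set are `0, ±1, ±2`, pairwise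
distinct in `ℤ₅`, so the odd map `ℤ₅ → ℤ₃` with `±1 ↦ ±1`, `±2 ↦ ±2` recovers every difference
`x - y` in `ℤ₃` from the difference of the embedded colours. Hence a `ℤ₃`-colouring avoiding
the folded forbidding function embeds to a `ℤ₅`-colouring avoiding the original one.
-/

namespace Multigraph

theorem GroupColorable.of_sub_retract {Γ Γ' : Type} [AddCommGroup Γ] [AddCommGroup Γ']
    {G : Multigraph} (hG : G.GroupColorable Γ) (embed : Γ → Γ') (fold : Γ' → Γ)
    (fold_sub : ∀ x y, fold (embed x - embed y) = x - y) : G.GroupColorable Γ' := by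
  intro φ
  obtain ⟨c, hc⟩ := hG (fold ∘ φ)
  refine ⟨embed ∘ c, fun e hconflict => hc e ?_⟩
  rw [Function.comp_apply, ← hconflict]
  exact (fold_sub _ _).symm

end Multigraph

def zmod3EmbedZMod5 (x : ZMod 3) : ZMod 5 := x.val

def zmod5FoldZMod3 : ZMod 5 → ZMod 3 := ![0, 1, 2, 1, 2]

theorem zmod5FoldZMod3_embed_sub (x y : ZMod 3) :
    zmod5FoldZMod3 (zmod3EmbedZMod5 x - zmod3EmbedZMod5 y) = x - y := by
  revert x y
  decide

/-- If a graph `G` is `ℤ₃`-colorable, then `G` is `ℤ₅`-colorable. -/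
theorem statement14 (G : Multigraph) (h : G.GroupColorable (ZMod 3)) :
    G.GroupColorable (ZMod 5) :=
  h.of_sub_retract zmod3EmbedZMod5 zmod5FoldZMod3 zmod5FoldZMod3_embed_sub
end

section
/- If a graph G is ℤ₃-connected, then G has an orientation in which every vertex, except possibly one, has outdegree at least 2; consequently, every graph obtained from G by identifying vertices (and removing resulting loops) on a vertex set of size r has at least 2r − 2 edges. -/
/-!
Given a vertex `x₀`, ℤ₃-connectivity yields a nowhere-zero `f` with net out-flow
`1 - deg v` at every `v ≠ x₀`. Reverse the edges with `f e = -1`, so that every edge carries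
`1` forwards. The net flow at `v` is then `out v - in v = 2 out v - deg v`, hence
`2 out v ≡ 1`, i.e. `out v ≡ 2 (mod 3)` and `out v ≥ 2`. Summing out-degrees gives
`|E| ≥ 2|V| - 2`, and this applies to every graph obtained by identifying vertices,
because ℤ₃-connectivity passes to such quotients: a boundary on the quotient lifts to one
supported on a section, and edges inside a fibre contribute nothing to the quotient flow.
-/

open Finset

lemma natCast_card_subtype {R : Type} [AddCommMonoidWithOne R] {α : Type} [Fintype α]
    (p : α → Prop) [DecidablePred p] :
    (Nat.card {x // p x} : R) = ∑ x : α, if p x then 1 else 0 := by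
  rw [Nat.card_eq_fintype_card, Fintype.card_subtype, natCast_card_filter]

lemma zmod_three_eq_ite_one_neg_one :
    ∀ x : ZMod 3, x ≠ 0 → x = if x = 1 then 1 else -1 := by
  decide

lemma two_le_of_natCast_eq_two {n : ℕ} (h : (n : ZMod 3) = 2) : 2 ≤ n := by
  by_contra! hn
  interval_cases n <;> revert h <;> decide

namespace Multigraph

section Orientation

variable (G : Multigraph)

lemma sum_outDeg (σ : G.E → Bool) : ∑ v : G.V, G.outDeg σ v = Nat.card G.E := by
  rw [← Nat.cast_id (∑ v, _), Nat.cast_sum]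
  simp only [outDeg, natCast_card_subtype]
  rw [sum_comm, Nat.card_eq_fintype_card, Fintype.card_eq_sum_ones]
  refine sum_congr rfl fun e _ => ?_
  cases σ e <;> simp

lemma netFlow_orientation {R : Type} [Ring R] (σ : G.E → Bool) (v : G.V) :
    G.netFlow (fun e => if σ e then (1 : R) else -1) v =
      2 * (G.outDeg σ v : R) - G.degree v := by
  simp only [netFlow, outDeg, degree, natCast_card_subtype, mul_sum, ← sum_sub_distrib]
  refine sum_congr rfl fun e _ => ?_
  have hloop := G.no_loop e
  cases σ e <;> by_cases hs : G.src e = v <;> by_cases ht : G.tgt e = v <;>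
    simp_all <;> norm_num

lemma two_mul_card_sub_two_le_card_E_of_two_le_outDeg {x₀ : G.V} {σ : G.E → Bool}
    (hσ : ∀ v, v ≠ x₀ → 2 ≤ G.outDeg σ v) :
    2 * Fintype.card G.V - 2 ≤ Nat.card G.E :=
  calc 2 * Fintype.card G.V - 2 = ∑ v ∈ univ.erase x₀, 2 := by
        rw [sum_const, card_erase_of_mem (mem_univ _), card_univ, smul_eq_mul]; omega
    _ ≤ ∑ v ∈ univ.erase x₀, G.outDeg σ v :=
        sum_le_sum fun v hv => hσ v (ne_of_mem_erase hv)
    _ ≤ ∑ v, G.outDeg σ v := sum_le_sum_of_subset (erase_subset _ _)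
    _ = Nat.card G.E := G.sum_outDeg σ

variable {G}

lemma GroupConnected.exists_two_le_outDeg (h : G.GroupConnected (ZMod 3)) (x₀ : G.V) :
    ∃ σ : G.E → Bool, ∀ v, v ≠ x₀ → 2 ≤ G.outDeg σ v := by
  set β : G.V → ZMod 3 := fun v =>
    (1 - G.degree v) - if v = x₀ then ∑ u, (1 - (G.degree u : ZMod 3)) else 0
  have hβ : ∑ v, β v = 0 := by simp [β, sum_sub_distrib]
  obtain ⟨f, hf, hflow⟩ := h β hβ
  refine ⟨fun e => decide (f e = 1), fun v hv => two_le_of_natCast_eq_two ?_⟩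
  have hf_sign : f = fun e => if decide (f e = 1) then 1 else -1 := funext fun e => by
    simpa using zmod_three_eq_ite_one_neg_one (f e) (hf e)
  have hflow_v := hflow v
  rw [hf_sign, netFlow_orientation] at hflow_v
  simp only [β, hv, if_false, sub_zero] at hflow_v
  have h3 : (3 : ZMod 3) = 0 := rfl
  linear_combination 2 * hflow_v - (G.outDeg _ v : ZMod 3) * h3

lemma GroupConnected.two_mul_card_sub_two_le_card_E (h : G.GroupConnected (ZMod 3)) :
    2 * Fintype.card G.V - 2 ≤ Nat.card G.E := by
  rcases isEmpty_or_nonempty G.V with _ | ⟨⟨x₀⟩⟩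
  · simp
  obtain ⟨σ, hσ⟩ := h.exists_two_le_outDeg x₀
  exact G.two_mul_card_sub_two_le_card_E_of_two_le_outDeg hσ

end Orientation

section Contraction

variable (G : Multigraph) {W : Type} [DecidableEq W] (π : G.V → W) {Γ : Type} [AddCommGroup Γ]

abbrev contract [Fintype W] : Multigraph where
  V := W
  E := {e : G.E // π (G.src e) ≠ π (G.tgt e)}
  vFintype := inferInstance
  eFintype := inferInstance
  vDecEq := inferInstance
  eDecEq := inferInstance
  src e := π (G.src e.1)
  tgt e := π (G.tgt e.1)
  no_loop e := e.2

lemma sum_fiber_sum_ite_eq (g : G.E → G.V) (f : G.E → Γ) (w : W) :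
    ∑ v with π v = w, ∑ e, (if g e = v then f e else 0) =
      ∑ e, if π (g e) = w then f e else 0 := by
  rw [sum_comm]
  refine sum_congr rfl fun e _ => ?_
  simp

variable [Fintype W]

lemma netFlow_contract (f : G.E → Γ) (w : W) :
    (G.contract π).netFlow (fun e => f e.1) w = ∑ v with π v = w, G.netFlow f v := by
  simp only [netFlow, sum_sub_distrib, sum_fiber_sum_ite_eq]
  rw [← sum_sub_distrib, ← sum_sub_distrib]
  refine (sum_congr_set {e | π (G.src e) ≠ π (G.tgt e)} _ _ (fun _ _ => rfl)
    fun e hloop => ?_).symm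
  simp_all

variable {G π}

lemma GroupConnected.contract (hπ : Function.Surjective π) (h : G.GroupConnected Γ) :
    (G.contract π).GroupConnected Γ := by
  intro β hβ
  set s := Function.surjInv hπ
  set β' : G.V → Γ := fun v => if s (π v) = v then β (π v) else 0
  have hβ' : ∀ w, ∑ v with π v = w, β' v = β w := by
    intro w
    rw [sum_eq_single_of_mem (s w) (by simp [s, Function.surjInv_eq hπ])]
    · simp [β', s, Function.surjInv_eq hπ]
    · intro v hv hne
      simp only [mem_filter] at hv
      simp [β', hv.2, Ne.symm hne]
  obtain ⟨f, hf, hflow⟩ := h β' (by rw [← sum_fiberwise univ π β']; simpa [hβ'])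
  refine ⟨fun e => f e.1, fun e => hf e.1, fun w => ?_⟩
  rw [netFlow_contract]
  simp only [hflow, hβ']

end Contraction

end Multigraph

/-- If `G` is `ℤ₃`-connected, then `G` has an orientation (described by
`σ : E → Bool`, telling for each edge whether it keeps its reference direction) in which
all vertices except possibly one have out-degree at least 2; consequently every graph
obtained from `G` by identifying vertices (via a surjection `π` onto a vertex set `W` of
size `r`, deleting the arising loops) has at least `2r - 2` edges. -/
theorem statement16 (G : Multigraph) (h : G.GroupConnected (ZMod 3)) :
    (∃ σ : G.E → Bool, ∀ x y : G.V, x ≠ y →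
        2 ≤ G.outDeg σ x ∨ 2 ≤ G.outDeg σ y) ∧
    (∀ (W : Type) [Fintype W] (π : G.V → W), Function.Surjective π →
        2 * Fintype.card W - 2 ≤
          Nat.card {e : G.E // π (G.src e) ≠ π (G.tgt e)}) := by
  classical
  refine ⟨?_, fun W _ π hπ => (h.contract hπ).two_mul_card_sub_two_le_card_E⟩
  rcases isEmpty_or_nonempty G.V with _ | ⟨⟨x₀⟩⟩
  · exact ⟨fun _ => true, fun x => isEmptyElim x⟩
  obtain ⟨σ, hσ⟩ := h.exists_two_le_outDeg x₀
  refine ⟨σ, fun x y hxy => ?_⟩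
  by_cases hx : x = x₀
  · exact Or.inr (hσ y (hx ▸ hxy.symm))
  · exact Or.inl (hσ x hx)
end

section
/- For every ε > 0 there exist infinitely many primes p with the following property: there exists a graph G and a finite abelian group Γ' with |Γ'| ≥ (2 − ε)·p such that G is ℤ_p-colorable but G is not Γ'-colorable. -/
open Finset Pointwise

namespace ZMod

theorem sum_eq_sum_range {k : ℕ} [NeZero k] {M : Type*} [AddCommMonoid M] (g : ZMod k → M) :
    ∑ i, g i = ∑ l ∈ range k, g l :=
  sum_nbij' val (fun l => (l : ZMod k)) (fun i _ => mem_range.2 (val_lt i))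
    (fun _ _ => mem_univ _) (fun i _ => natCast_zmod_val i)
    (fun _ hl => val_cast_of_lt (mem_range.1 hl)) (fun i _ => by rw [natCast_zmod_val])

theorem exists_sub_eq_of_sum_eq_zero {k : ℕ} [NeZero k] {M : Type*} [AddCommGroup M]
    {f : ZMod k → M} (hf : ∑ i, f i = 0) : ∃ c : ZMod k → M, ∀ i, c (i + 1) - c i = f i := by
  refine ⟨fun i => ∑ l ∈ range i.val, f l, fun i => ?_⟩
  have hi : ((i.val : ℕ) : ZMod k) = i := natCast_zmod_val i
  have hsucc : i + 1 = ((i.val + 1 : ℕ) : ZMod k) := by push_cast [hi]; rfl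
  show ∑ l ∈ range (i + 1).val, f l - ∑ l ∈ range i.val, f l = f i
  obtain hlt | heq : i.val + 1 < k ∨ i.val + 1 = k := by have := val_lt i; omega
  · rw [hsucc, val_cast_of_lt hlt, sum_range_succ, hi, add_sub_cancel_left]
  · have hfull : ∑ l ∈ range (i.val + 1), f l = 0 := by rw [heq, ← sum_eq_sum_range, hf]
    rw [sum_range_succ, hi] at hfull
    rw [hsucc, heq, natCast_self, val_zero, range_zero, sum_empty, zero_sub,
      neg_eq_iff_eq_neg, eq_neg_iff_add_eq_zero, hfull]

theorem min_le_card_finsetSum {p : ℕ} (hp : p.Prime) {ι : Type*} (s : Finset ι)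
    {B : ι → Finset (ZMod p)} (hB : ∀ i ∈ s, (B i).Nonempty) :
    min p ((∑ i ∈ s, #(B i)) + 1 - #s) ≤ #(∑ i ∈ s, B i) := by
  induction s using Finset.cons_induction with
  | empty => simp
  | cons a t ha ih =>
    have hBa := hB a (mem_cons_self a t)
    have ht : ∀ i ∈ t, (B i).Nonempty := fun i hi => hB i (mem_cons_of_mem hi)
    have hcard : #t ≤ ∑ i ∈ t, #(B i) :=
      card_eq_sum_ones t ▸ sum_le_sum fun i hi => (ht i hi).card_pos
    have ih := ih ht
    have hsum : (∑ i ∈ t, B i).Nonempty := card_pos.1 (by have := hp.two_le; omega)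
    have := cauchy_davenport hp hBa hsum
    have := hBa.card_pos
    rw [sum_cons, sum_cons, card_cons]
    omega

theorem exists_sum_eq_of_le_sum_card {p : ℕ} (hp : p.Prime) {ι : Type*} [Fintype ι]
    {B : ι → Finset (ZMod p)} (hB : ∀ i, (B i).Nonempty)
    (h : p + Fintype.card ι ≤ (∑ i, #(B i)) + 1) (x : ZMod p) :
    ∃ f : ι → ZMod p, (∀ i, f i ∈ B i) ∧ ∑ i, f i = x := by
  have : NeZero p := ⟨hp.ne_zero⟩
  have huniv : ∑ i, B i = univ := by
    refine eq_univ_of_card _ ?_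
    have := min_le_card_finsetSum hp univ fun i _ => hB i
    have := card_le_univ (∑ i, B i)
    rw [card_univ, ZMod.card] at *
    omega
  have hx : x ∈ ((∑ i, B i : Finset (ZMod p)) : Set (ZMod p)) := by simp [huniv]
  rw [coe_sum, Set.mem_fintype_sum] at hx
  obtain ⟨f, hf, hfx⟩ := hx
  exact ⟨f, hf, hfx⟩

end ZMod

def cycleMultigraph (k m : ℕ) [NeZero k] (hk : 1 < k) : Multigraph where
  V := ZMod k
  E := ZMod k × Fin m
  vFintype := inferInstance
  eFintype := inferInstance
  vDecEq := inferInstance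
  eDecEq := inferInstance
  src e := e.1
  tgt e := e.1 + 1
  no_loop e h := by
    have : Fact (1 < k) := ⟨hk⟩
    simp at h

namespace cycleMultigraph

variable {k m : ℕ} [NeZero k] (hk : 1 < k)

theorem groupColorable_zmod {p : ℕ} (hp : p.Prime) (hpkm : p + k ≤ k * (p - m) + 1) :
    (cycleMultigraph k m hk).GroupColorable (ZMod p) := by
  have : NeZero p := ⟨hp.ne_zero⟩
  intro φ
  set B : ZMod k → Finset (ZMod p) := fun i => (univ.image fun j => φ (i, j))ᶜ
  have hB : ∀ i, p - m ≤ #(B i) := fun i => by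
    have := (card_image_le (s := univ) (f := fun j => φ (i, j))).trans_eq (card_fin m)
    rw [card_compl, ZMod.card]
    omega
  have hpm : 0 < p - m := Nat.pos_of_ne_zero fun h => by rw [h, mul_zero] at hpkm; omega
  have hBne : ∀ i, (B i).Nonempty := fun i => card_pos.1 (hpm.trans_le (hB i))
  have hsum : p + Fintype.card (ZMod k) ≤ (∑ i, #(B i)) + 1 := by
    have := sum_le_sum fun i (_ : i ∈ univ) => hB i
    rw [sum_const, card_univ, ZMod.card, smul_eq_mul] at this
    rw [ZMod.card]
    omega
  obtain ⟨f, hfB, hf0⟩ := ZMod.exists_sum_eq_of_le_sum_card hp hBne hsum 0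
  obtain ⟨c, hc⟩ := ZMod.exists_sub_eq_of_sum_eq_zero hf0
  refine ⟨c, fun ⟨i, j⟩ hij => ?_⟩
  have hij : f i = φ (i, j) := (hc i).symm.trans hij
  exact mem_compl.1 (hfB i) (mem_image.2 ⟨j, mem_univ j, hij.symm⟩)

theorem not_groupColorable_zmod_two_prod (hodd : Odd k) [NeZero m] :
    ¬ (cycleMultigraph k m hk).GroupColorable (ZMod 2 × ZMod m) := by
  intro h
  obtain ⟨c, hc⟩ : ∃ c : ZMod k → ZMod 2 × ZMod m,
      ∀ e : ZMod k × Fin m, c (e.1 + 1) - c e.1 ≠ (0, ((e.2 : ℕ) : ZMod m)) :=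
    h fun e => (0, ((e.2 : ℕ) : ZMod m))
  have hstep : ∀ i : ZMod k, (c (i + 1) - c i).1 = 1 := fun i => by
    by_contra hne
    refine hc (i, ⟨(c (i + 1) - c i).2.val, ZMod.val_lt _⟩) (Prod.ext ?_ ?_)
    · exact ((by decide : ∀ a : ZMod 2, a = 0 ∨ a = 1) _).resolve_right hne
    · exact (ZMod.natCast_zmod_val _).symm
  have htelescope : ∑ i : ZMod k, (c (i + 1) - c i) = 0 := by
    rw [sum_sub_distrib,
      Fintype.sum_equiv (Equiv.addRight 1) (fun i => c (i + 1)) c fun _ => rfl, sub_self]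
  have := congrArg Prod.fst htelescope
  rw [Prod.fst_sum, sum_congr rfl fun i _ => hstep i, sum_const, card_univ, ZMod.card,
    nsmul_one, hodd.natCast_zmod_two] at this
  exact one_ne_zero this

end cycleMultigraph

/-- For every `ε > 0` there are infinitely many primes `p` for which some
graph `G` is `ℤ_p`-colorable but fails to be `Γ'`-colorable for some finite abelian
group `Γ'` with `|Γ'| ≥ (2 - ε)·p`. -/
theorem statement18 (ε : ℝ) (hε : 0 < ε) :
    {p : ℕ | p.Prime ∧
      ∃ (G : Multigraph) (Γ' : Type) (iΓ' : AddCommGroup Γ') (jΓ' : Fintype Γ'),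
        (2 - ε) * (p : ℝ) ≤ (@Fintype.card Γ' jΓ' : ℝ) ∧
        G.GroupColorable (ZMod p) ∧
        ¬ @Multigraph.GroupColorable G Γ' iΓ' }.Infinite := by
  obtain ⟨N, hN⟩ := exists_nat_gt (8 / ε)
  have hNε : 8 < N * ε := (div_lt_iff₀ hε).1 hN
  have hN0 : N ≠ 0 := by rintro rfl; norm_num at hNε
  set k := 2 * N + 1
  have hk : 1 < k := by omega
  have : NeZero k := ⟨by omega⟩
  refine (Nat.infinite_setOfPred_prime.sdiff (Set.finite_le_nat k)).mono ?_
  rintro p ⟨hp, hkp : ¬ p ≤ k⟩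
  obtain ⟨q, hqk, hpq, hq3⟩ : ∃ q, q * k ≤ p ∧ p < k * (q + 1) ∧ q ≤ p / 3 :=
    ⟨p / k, Nat.div_mul_le_self p k, Nat.lt_mul_div_succ p (by omega),
      Nat.div_le_div_left (by omega) (by norm_num)⟩
  set m := p - q - 2 with hm
  have : NeZero m := ⟨by omega⟩
  refine ⟨hp, cycleMultigraph k m hk, ZMod 2 × ZMod m, inferInstance, inferInstance, ?_,
    cycleMultigraph.groupColorable_zmod hk hp ?_,
    cycleMultigraph.not_groupColorable_zmod_two_prod hk (odd_two_mul_add_one N)⟩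
  · have hqkℝ : (q : ℝ) * (2 * N + 1) ≤ p := by exact_mod_cast hqk
    have hpkℝ : (2 * N + 1 : ℝ) < p := by exact_mod_cast not_le.1 hkp
    rw [Fintype.card_prod, ZMod.card, ZMod.card, Nat.cast_mul, hm,
      Nat.cast_sub (by omega), Nat.cast_sub (by omega)]
    push_cast
    nlinarith [mul_le_mul_of_nonneg_right hqkℝ hε.le,
      mul_nonneg (q.cast_nonneg (α := ℝ)) (sub_nonneg.2 hNε.le)]
  · rw [show p - m = q + 2 by omega, mul_add]
    rw [mul_add] at hpq
    omega
end
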